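/- arXiv:2005.04123 — 2 statements merged into one kernel-verified Lean document; each statement's English description precedes it below -/
import Mathlib

section
/- A clause c of a CNF formula F is superredundant if and only if either F derives by resolution a proper subclause of c, or F derives by resolution two clauses c1 ∨ a and c2 ∨ ¬a for some variable a not occurring in c and clauses c1, c2 with c = c1 ∨ c2. -/
abbrev Lit : Type := ℕ × Bool
abbrev Clause : Type := Finset Lit
abbrev Cnf : Type := Finset Clause

def Lit.negate (l : Lit) : Lit := (l.1, !l.2)

def litSat (M : ℕ → Bool) (l : Lit) : Prop := M l.1 = l.2

def clauseSat (M : ℕ → Bool) (c : Clause) : Prop := ∃ l ∈ c, litSat M l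

def cnfSat (M : ℕ → Bool) (F : Cnf) : Prop := ∀ c ∈ F, clauseSat M c

def ClTaut (c : Clause) : Prop := ∃ v : ℕ, (v, true) ∈ c ∧ (v, false) ∈ c

def cnfVars (F : Cnf) : Set ℕ := {v | ∃ c ∈ F, ∃ b, (v, b) ∈ c}

def isResolvent (c1 c2 r : Clause) (v : ℕ) : Prop :=
  (v, true) ∈ c1 ∧ (v, false) ∈ c2 ∧
    r = c1.erase (v, true) ∪ c2.erase (v, false)

inductive Deriv (F : Set Clause) : Clause → Prop
  | base {c : Clause} : c ∈ F → Deriv F c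
  | step {c1 c2 r : Clause} {v : ℕ} : Deriv F c1 → Deriv F c2 →
      isResolvent c1 c2 r v → ¬ ClTaut r → Deriv F r

def ResCn (F : Set Clause) : Set Clause := {c | Deriv F c}

def setSat (M : ℕ → Bool) (S : Set Clause) : Prop := ∀ c ∈ S, clauseSat M c

def setEntails (S : Set Clause) (c : Clause) : Prop :=
  ∀ M, setSat M S → clauseSat M c

def superRedundant (F : Cnf) (c : Clause) : Prop :=
  setEntails (ResCn ↑F \ {c}) c

def cnfSize (F : Cnf) : ℕ := ∑ c ∈ F, c.card

def cnfEquiv (F G : Cnf) : Prop := ∀ M, cnfSat M F ↔ cnfSat M G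

/-!
Suppose `c` is not tautological and is entailed by the other clauses derivable from `F`. Given any
assignment `N`, change it on the variables of `c` so that it falsifies `c`; some derived clause
`d ≠ c` is then false as well, so `d` consists of literals of `c` plus a residual `r`, over the
variables outside `c`, that is false under `N`. The residuals therefore form an unsatisfiable set,
and a resolution step on a variable outside `c` between two of them yields a residual again, unless
it produces `c` itself, which is the second alternative. By compactness and refutational
completeness of resolution the empty clause is a residual, i.e. `F` derives a proper subclause
of `c`.
-/

def clauseVars (c : Clause) : Finset ℕ := c.image Prod.fst

lemma mem_clauseVars_of_mem {c : Clause} {v : ℕ} {b : Bool} (h : (v, b) ∈ c) :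
    v ∈ clauseVars c :=
  Finset.mem_image_of_mem Prod.fst h

lemma clauseVars_mono {c d : Clause} (h : c ⊆ d) : clauseVars c ⊆ clauseVars d :=
  Finset.image_subset_image h

lemma clauseVars_union (c d : Clause) : clauseVars (c ∪ d) = clauseVars c ∪ clauseVars d :=
  Finset.image_union _ _

lemma clauseSat_union {M : ℕ → Bool} {c d : Clause} :
    clauseSat M (c ∪ d) ↔ clauseSat M c ∨ clauseSat M d := by
  simp only [clauseSat, Finset.mem_union, or_and_right, exists_or]

lemma ClTaut.mono {c d : Clause} (h : ClTaut c) (hcd : c ⊆ d) : ClTaut d :=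
  let ⟨v, ht, hf⟩ := h
  ⟨v, hcd ht, hcd hf⟩

lemma not_clTaut_of_not_clauseSat {M : ℕ → Bool} {c : Clause} (h : ¬ clauseSat M c) :
    ¬ ClTaut c := by
  rintro ⟨v, ht, hf⟩
  cases hv : M v
  · exact h ⟨_, hf, hv⟩
  · exact h ⟨_, ht, hv⟩

lemma not_clTaut_union {c d : Clause} (hc : ¬ ClTaut c) (hd : ¬ ClTaut d)
    (hcd : Disjoint (clauseVars c) (clauseVars d)) : ¬ ClTaut (c ∪ d) := by
  rintro ⟨v, ht, hf⟩
  rcases Finset.mem_union.1 ht with ht | ht <;> rcases Finset.mem_union.1 hf with hf | hf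
  · exact hc ⟨v, ht, hf⟩
  · exact Finset.disjoint_left.1 hcd (mem_clauseVars_of_mem ht) (mem_clauseVars_of_mem hf)
  · exact Finset.disjoint_left.1 hcd (mem_clauseVars_of_mem hf) (mem_clauseVars_of_mem ht)
  · exact hd ⟨v, ht, hf⟩

def DerivSplit (F : Set Clause) (c : Clause) : Prop :=
  ∃ (a : ℕ) (c1 c2 : Clause), Deriv F (insert (a, true) c1) ∧ Deriv F (insert (a, false) c2) ∧
    (a, true) ∉ c ∧ (a, false) ∉ c ∧ c = c1 ∪ c2

lemma superRedundant_of_deriv_ssubset {F : Cnf} {c c' : Clause} (hd : Deriv ↑F c')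
    (hc' : c' ⊂ c) : superRedundant F c := by
  intro M hM
  obtain ⟨l, hl, hsat⟩ := hM c' ⟨hd, hc'.ne⟩
  exact ⟨l, hc'.subset hl, hsat⟩

lemma superRedundant_of_derivSplit {F : Cnf} {c : Clause} (h : DerivSplit ↑F c) :
    superRedundant F c := by
  obtain ⟨a, c1, c2, hd1, hd2, hat, haf, rfl⟩ := h
  intro M hM
  obtain ⟨l1, hl1, hs1⟩ := hM _ ⟨hd1, fun he => hat (he ▸ Finset.mem_insert_self _ _)⟩
  obtain ⟨l2, hl2, hs2⟩ := hM _ ⟨hd2, fun he => haf (he ▸ Finset.mem_insert_self _ _)⟩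
  rw [clauseSat_union]
  rcases Finset.mem_insert.1 hl1 with rfl | hl1
  · rcases Finset.mem_insert.1 hl2 with rfl | hl2
    · cases hs1.symm.trans hs2
    · exact Or.inr ⟨l2, hl2, hs2⟩
  · exact Or.inl ⟨l1, hl1, hs1⟩

def ResolutionClosed (S : Set Clause) : Prop :=
  ∀ ⦃r1 r2 r : Clause⦄ ⦃a : ℕ⦄, r1 ∈ S → r2 ∈ S → isResolvent r1 r2 r a → ¬ ClTaut r → r ∈ S

lemma not_clauseSat_erase_of_update {N : ℕ → Bool} {a : ℕ} {b : Bool} {r : Clause}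
    (h : ¬ clauseSat (Function.update N a b) r) :
    a ∉ clauseVars (r.erase (a, !b)) ∧ ¬ clauseSat N (r.erase (a, !b)) := by
  have hb : ∀ l ∈ r.erase (a, !b), l.1 ≠ a := by
    rintro ⟨v, b'⟩ hl rfl
    obtain ⟨hne, hl⟩ := Finset.mem_erase.1 hl
    have : b' = b := by cases b <;> cases b' <;> simp_all
    exact h ⟨_, hl, by simp [litSat, this]⟩
  refine ⟨fun ha => ?_, fun ⟨l, hl, hsat⟩ => ?_⟩
  · obtain ⟨l, hl, rfl⟩ := Finset.mem_image.1 ha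
    exact hb l hl rfl
  · refine h ⟨l, Finset.mem_of_mem_erase hl, ?_⟩
    rwa [litSat, Function.update_of_ne (hb l hl)]

theorem ResolutionClosed.empty_mem_of_vars_subset {S : Set Clause} (hS : ResolutionClosed S)
    (W : Finset ℕ) (hW : ∀ N, ∃ r ∈ S, clauseVars r ⊆ W ∧ ¬ clauseSat N r) : ∅ ∈ S := by
  induction W using Finset.induction_on with
  | empty =>
    obtain ⟨r, hr, hrW, -⟩ := hW fun _ => true
    rw [Finset.subset_empty, clauseVars, Finset.image_eq_empty] at hrW
    exact hrW ▸ hr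
  | insert a W ha ih =>
    refine ih fun N => ?_
    obtain ⟨rt, hrt, hrtW, hNt⟩ := hW (Function.update N a true)
    obtain ⟨rf, hrf, hrfW, hNf⟩ := hW (Function.update N a false)
    obtain ⟨hat, hNt⟩ := not_clauseSat_erase_of_update hNt
    obtain ⟨haf, hNf⟩ := not_clauseSat_erase_of_update hNf
    simp only [Bool.not_true, Bool.not_false] at hat hNt haf hNf
    have hrtW' := (Finset.subset_insert_iff_of_notMem hat).1
      ((clauseVars_mono (Finset.erase_subset _ _)).trans hrtW)
    have hrfW' := (Finset.subset_insert_iff_of_notMem haf).1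
      ((clauseVars_mono (Finset.erase_subset _ _)).trans hrfW)
    by_cases ht : (a, false) ∈ rt
    · by_cases hf : (a, true) ∈ rf
      · have hN : ¬ clauseSat N (rf.erase (a, true) ∪ rt.erase (a, false)) := by
          rw [clauseSat_union]
          exact not_or.2 ⟨hNf, hNt⟩
        refine ⟨_, hS hrf hrt ⟨hf, ht, rfl⟩ (not_clTaut_of_not_clauseSat hN), ?_, hN⟩
        rw [clauseVars_union]
        exact Finset.union_subset hrfW' hrtW'
      · rw [Finset.erase_eq_of_notMem hf] at hrfW' hNf
        exact ⟨rf, hrf, hrfW', hNf⟩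
    · rw [Finset.erase_eq_of_notMem ht] at hrtW' hNt
      exact ⟨rt, hrt, hrtW', hNt⟩

lemma isClosed_setOf_clauseSat (c : Clause) : IsClosed {M : ℕ → Bool | clauseSat M c} := by
  have : {M : ℕ → Bool | clauseSat M c} = ⋃ l ∈ c, {M | M l.1 = l.2} := by
    ext M
    simp [clauseSat, litSat]
  rw [this]
  exact isClosed_biUnion_finset fun l _ => isClosed_eq (continuous_apply l.1) continuous_const

lemma exists_vars_subset_of_unsat {S : Set Clause}
    (hS : ∀ N, ∃ r ∈ S, ¬ clauseSat N r) :
    ∃ W : Finset ℕ, ∀ N, ∃ r ∈ S, clauseVars r ⊆ W ∧ ¬ clauseSat N r := by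
  obtain ⟨u, hu⟩ := isCompact_univ.elim_finite_subfamily_closed
    (fun r : S => {M : ℕ → Bool | clauseSat M r}) (fun r => isClosed_setOf_clauseSat r) (by
      ext N
      simpa using hS N)
  refine ⟨u.biUnion fun r => clauseVars r, fun N => ?_⟩
  have hN : N ∉ Set.univ ∩ ⋂ r ∈ u, {M : ℕ → Bool | clauseSat M r} := hu ▸ Set.notMem_empty N
  simp only [Set.mem_inter_iff, Set.mem_univ, Set.mem_iInter, Set.mem_ofPred_eq, true_and,
    not_forall] at hN
  obtain ⟨r, hr, hN⟩ := hN
  exact ⟨r, r.2, Finset.subset_biUnion_of_mem (fun r : S => clauseVars r) hr, hN⟩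

theorem ResolutionClosed.empty_mem {S : Set Clause} (hS : ResolutionClosed S)
    (hunsat : ∀ N, ∃ r ∈ S, ¬ clauseSat N r) : ∅ ∈ S :=
  let ⟨W, hW⟩ := exists_vars_subset_of_unsat hunsat
  hS.empty_mem_of_vars_subset W hW

def Residual (F : Set Clause) (c r : Clause) : Prop :=
  Disjoint (clauseVars r) (clauseVars c) ∧ ∃ c' ⊆ c, Deriv F (c' ∪ r) ∧ c' ∪ r ≠ c

lemma Deriv.resolve_union {F : Set Clause} {c1 c2 r1 r2 r : Clause} {a : ℕ}
    (hd1 : Deriv F (c1 ∪ r1)) (hd2 : Deriv F (c2 ∪ r2)) (hr : isResolvent r1 r2 r a)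
    (ha1 : (a, true) ∉ c1) (ha2 : (a, false) ∉ c2) (hnt : ¬ ClTaut (c1 ∪ c2 ∪ r)) :
    Deriv F (c1 ∪ c2 ∪ r) := by
  obtain ⟨h1, h2, rfl⟩ := hr
  have key : (c1 ∪ r1).erase (a, true) ∪ (c2 ∪ r2).erase (a, false)
      = c1 ∪ c2 ∪ (r1.erase (a, true) ∪ r2.erase (a, false)) := by
    rw [Finset.erase_union_distrib, Finset.erase_union_distrib, Finset.erase_eq_of_notMem ha1,
      Finset.erase_eq_of_notMem ha2, Finset.union_union_union_comm]
  rw [← key] at hnt ⊢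
  exact Deriv.step hd1 hd2 ⟨Finset.mem_union_right _ h1, Finset.mem_union_right _ h2, rfl⟩ hnt

lemma resolutionClosed_residual {F : Set Clause} {c : Clause} (hc : ¬ ClTaut c)
    (hsplit : ¬ DerivSplit F c) : ResolutionClosed {r | Residual F c r} := by
  rintro r1 r2 r a ⟨hv1, c1, hc1, hd1, -⟩ ⟨hv2, c2, hc2, hd2, -⟩ hr hrt
  have hac : a ∉ clauseVars c := Finset.disjoint_left.1 hv1 (mem_clauseVars_of_mem hr.1)
  have hvr : Disjoint (clauseVars r) (clauseVars c) := by
    rw [hr.2.2, clauseVars_union]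
    exact Finset.disjoint_union_left.2
      ⟨hv1.mono_left (clauseVars_mono (Finset.erase_subset _ _)),
        hv2.mono_left (clauseVars_mono (Finset.erase_subset _ _))⟩
  have hsub : c1 ∪ c2 ⊆ c := Finset.union_subset hc1 hc2
  have hd := Deriv.resolve_union hd1 hd2 hr (fun h => hac (mem_clauseVars_of_mem (hc1 h)))
    (fun h => hac (mem_clauseVars_of_mem (hc2 h)))
    (not_clTaut_union (fun h => hc (h.mono hsub)) hrt (hvr.symm.mono_left (clauseVars_mono hsub)))
  refine ⟨hvr, c1 ∪ c2, hsub, hd, fun heq => hsplit ?_⟩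
  -- a resolvent equal to `c` can only come from the unit residuals `{a}` and `{¬a}`
  have hr0 : r = ∅ := Finset.eq_empty_of_forall_notMem fun l hl =>
    Finset.disjoint_left.1 hvr (mem_clauseVars_of_mem hl)
      (mem_clauseVars_of_mem (heq ▸ Finset.mem_union_right _ hl))
  obtain ⟨h1, h2, rfl⟩ := hr
  obtain ⟨he1, he2⟩ := Finset.union_eq_empty.1 hr0
  have e1 : r1 = {(a, true)} := ((Finset.erase_eq_empty_iff _ _).1 he1).resolve_left
    (Finset.ne_empty_of_mem h1)
  have e2 : r2 = {(a, false)} := ((Finset.erase_eq_empty_iff _ _).1 he2).resolve_left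
    (Finset.ne_empty_of_mem h2)
  rw [e1, Finset.union_singleton] at hd1
  rw [e2, Finset.union_singleton] at hd2
  rw [hr0, Finset.union_empty] at heq
  exact ⟨a, c1, c2, hd1, hd2, fun h => hac (mem_clauseVars_of_mem h),
    fun h => hac (mem_clauseVars_of_mem h), heq.symm⟩

def falsifier (c : Clause) (N : ℕ → Bool) (v : ℕ) : Bool :=
  if (v, true) ∈ c then false else if (v, false) ∈ c then true else N v

lemma falsifier_of_notMem {c : Clause} {N : ℕ → Bool} {v : ℕ} (hv : v ∉ clauseVars c) :
    falsifier c N v = N v := by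
  rw [falsifier, if_neg fun h => hv (mem_clauseVars_of_mem h),
    if_neg fun h => hv (mem_clauseVars_of_mem h)]

lemma not_clauseSat_falsifier {c : Clause} (hc : ¬ ClTaut c) (N : ℕ → Bool) :
    ¬ clauseSat (falsifier c N) c := by
  rintro ⟨⟨v, b⟩, hl, hsat⟩
  unfold litSat falsifier at hsat
  cases b
  · by_cases ht : (v, true) ∈ c
    · exact hc ⟨v, ht, hl⟩
    · simp [ht, hl] at hsat
  · simp [hl] at hsat

lemma mem_of_not_litSat_falsifier {c : Clause} {N : ℕ → Bool} {l : Lit}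
    (hl : l.1 ∈ clauseVars c) (h : ¬ litSat (falsifier c N) l) : l ∈ c := by
  obtain ⟨⟨v, b⟩, hvb, hv⟩ := Finset.mem_image.1 hl
  obtain ⟨w, b'⟩ := l
  subst hv
  unfold litSat falsifier at h
  cases b <;> cases b' <;> split_ifs at h <;> simp_all

lemma exists_residual_not_clauseSat {F : Cnf} {c : Clause} (hc : ¬ ClTaut c)
    (hsr : superRedundant F c) (N : ℕ → Bool) : ∃ r, Residual ↑F c r ∧ ¬ clauseSat N r := by
  obtain ⟨d, ⟨hd, hdc⟩, hMd⟩ : ∃ d ∈ ResCn ↑F \ {c}, ¬ clauseSat (falsifier c N) d := by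
    by_contra! h
    exact not_clauseSat_falsifier hc N (hsr _ h)
  have hsplit : d.filter (fun l => l.1 ∈ clauseVars c) ∪ d.filter (fun l => l.1 ∉ clauseVars c)
      = d := Finset.filter_union_filter_not_eq _ _
  refine ⟨d.filter (fun l => l.1 ∉ clauseVars c),
    ⟨?_, _, ?_, by rwa [hsplit], by rwa [hsplit]⟩, ?_⟩
  · exact Finset.disjoint_left.2 fun v hv => by
      obtain ⟨l, hl, rfl⟩ := Finset.mem_image.1 hv
      exact (Finset.mem_filter.1 hl).2
  · intro l hl
    obtain ⟨hld, hlc⟩ := Finset.mem_filter.1 hl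
    exact mem_of_not_litSat_falsifier hlc fun hsat => hMd ⟨l, hld, hsat⟩
  · rintro ⟨l, hl, hsat⟩
    obtain ⟨hld, hlc⟩ := Finset.mem_filter.1 hl
    exact hMd ⟨l, hld, by rwa [litSat, falsifier_of_notMem hlc]⟩

/-- A clause `c` of `F` is superredundant iff `F` derives by resolution a
proper subclause of `c`, or two clauses `c1 ∨ a` and `c2 ∨ ¬a` with `a` not
occurring in `c` and `c = c1 ∨ c2`. -/
theorem stmt14 (F : Cnf) (c : Clause) (hc : c ∈ F)
    (hNT : ∀ d ∈ F, ¬ ClTaut d) :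
    superRedundant F c ↔
      ((∃ c' : Clause, Deriv ↑F c' ∧ c' ⊂ c) ∨
       (∃ (a : ℕ) (c1 c2 : Clause),
         Deriv ↑F (insert (a, true) c1) ∧ Deriv ↑F (insert (a, false) c2) ∧
         (a, true) ∉ c ∧ (a, false) ∉ c ∧ c = c1 ∪ c2)) := by
  have hcNT : ¬ ClTaut c := hNT c hc
  refine ⟨fun hsr => ?_, ?_⟩
  · by_contra h
    obtain ⟨hsub, hsplit⟩ := not_or.1 h
    obtain ⟨-, c', hc', hd, hne⟩ := (resolutionClosed_residual hcNT hsplit).empty_mem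
      (exists_residual_not_clauseSat hcNT hsr)
    rw [Finset.union_empty] at hd hne
    exact hsub ⟨c', hd, Finset.ssubset_iff_subset_ne.2 ⟨hc', hne⟩⟩
  · rintro (⟨c', hd, hc'⟩ | hsplit)
    · exact superRedundant_of_deriv_ssubset hd hc'
    · exact superRedundant_of_derivSplit hsplit
end

section
/- If the literal l does not occur in any clause of the CNF formula F and F ∪ {l} is satisfiable, then the unit clause {l} is superirredundant in F ∪ {l}. -/
/-!
Take a model `M` of `F ∪ {l}` and flip the variable of `l`. Resolution never produces a new
occurrence of `l`: a resolvent of `{l}` on `l` loses `l`, and nothing else contains it. Hence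
every derived clause other than `{l}` avoids `l`; it is true under `M` by soundness, and since
`M` satisfies `l`, its true literal cannot be `¬l` and survives the flip. The flipped model thus
satisfies `ResCn (F ∪ {l}) \ {{l}}` but falsifies `l`.
-/

theorem clauseSat_of_isResolvent {M : ℕ → Bool} {c₁ c₂ r : Clause} {v : ℕ}
    (h₁ : clauseSat M c₁) (h₂ : clauseSat M c₂) (hr : isResolvent c₁ c₂ r v) :
    clauseSat M r := by
  obtain ⟨-, -, rfl⟩ := hr
  cases hv : M v
  · obtain ⟨w, hw, hMw⟩ := h₁
    refine ⟨w, Finset.mem_union_left _ (Finset.mem_erase.2 ⟨?_, hw⟩), hMw⟩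
    rintro rfl
    simp_all [litSat]
  · obtain ⟨w, hw, hMw⟩ := h₂
    refine ⟨w, Finset.mem_union_right _ (Finset.mem_erase.2 ⟨?_, hw⟩), hMw⟩
    rintro rfl
    simp_all [litSat]

theorem Deriv.clauseSat {S : Set Clause} {M : ℕ → Bool} (hS : setSat M S) {c : Clause}
    (hc : Deriv S c) : clauseSat M c := by
  induction hc with
  | base hcS => exact hS _ hcS
  | step _ _ hr _ ih₁ ih₂ => exact clauseSat_of_isResolvent ih₁ ih₂ hr

theorem Deriv.eq_singleton_of_mem {S : Set Clause} {l : Lit}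
    (hS : ∀ c ∈ S, l ∈ c → c = {l}) {c : Clause} (hc : Deriv S c) (hlc : l ∈ c) :
    c = {l} := by
  induction hc with
  | base hcS => exact hS _ hcS hlc
  | @step c₁ c₂ r v _ _ hr _ ih₁ ih₂ =>
    obtain ⟨hv₁, hv₂, rfl⟩ := hr
    rcases Finset.mem_union.1 hlc with h | h <;> obtain ⟨hne, hmem⟩ := Finset.mem_erase.1 h
    · rw [ih₁ hmem, Finset.mem_singleton] at hv₁
      exact absurd hv₁.symm hne
    · rw [ih₂ hmem, Finset.mem_singleton] at hv₂
      exact absurd hv₂.symm hne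

theorem not_litSat_update_negate (M : ℕ → Bool) (l : Lit) :
    ¬ litSat (Function.update M l.1 (!l.2)) l := by
  simp [litSat]

theorem clauseSat_update_of_not_mem {M : ℕ → Bool} {l : Lit} {c : Clause}
    (hl : litSat M l) (hc : clauseSat M c) (hlc : l ∉ c) :
    clauseSat (Function.update M l.1 (!l.2)) c := by
  obtain ⟨w, hw, hMw⟩ := hc
  have hwl : w.1 ≠ l.1 := fun h => hlc (Prod.ext h (hMw.symm.trans (h ▸ hl)) ▸ hw)
  exact ⟨w, hw, by simpa [litSat, Function.update_of_ne hwl] using hMw⟩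

theorem stmt18_general (F : Cnf) (l : Lit)
    (hocc : ∀ c ∈ F, l ∉ c)
    (hsat : ∃ M, cnfSat M (insert ({l} : Clause) F)) :
    ¬ superRedundant (insert ({l} : Clause) F) ({l} : Clause) := by
  intro hred
  obtain ⟨M, hM⟩ := hsat
  have hMl : litSat M l := by
    simpa [clauseSat] using hM {l} (Finset.mem_insert_self _ _)
  have hunit : ∀ c ∈ (↑(insert ({l} : Clause) F) : Set Clause), l ∈ c → c = {l} := by
    intro c hc hlc
    rcases Finset.mem_insert.1 hc with rfl | hcF
    · rfl
    · exact absurd hlc (hocc c hcF)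
  refine not_litSat_update_negate M l ?_
  simpa [clauseSat] using hred _ fun c ⟨hc, hne⟩ =>
    clauseSat_update_of_not_mem hMl (hc.clauseSat hM)
      fun hlc => hne (hc.eq_singleton_of_mem hunit hlc)

/-- If the literal `l` does not occur in `F` and `F ∪ {l}` is satisfiable, then
the unit clause `{l}` is superirredundant in `F ∪ {l}`. -/
theorem stmt18 (F : Cnf) (l : Lit)
    (hNT : ∀ c ∈ F, ¬ ClTaut c)
    (hocc : ∀ c ∈ F, l ∉ c)
    (hsat : ∃ M, cnfSat M (insert ({l} : Clause) F)) :
    ¬ superRedundant (insert ({l} : Clause) F) ({l} : Clause) :=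
  stmt18_general F l hocc hsat
end
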